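/- arXiv:2403.18798 — 3 statements merged into one kernel-verified Lean document; each statement's English description precedes it below -/
import Mathlib

section
/- A net of probability measures (P_α) on (F, τ_uF) converges weakly to P if and only if limsup_α P_α(H(K₁) ∩ ⋯ ∩ H(Kₘ)) ≤ P(H(K₁) ∩ ⋯ ∩ H(Kₘ)) for every m ∈ ℕ and every finite collection K₁,…,Kₘ of non-empty compact subsets of E. -/
open TopologicalSpace MeasureTheory Filter Set
open scoped ENNReal

/-- The hitting set `H(A)` of a subset `A ⊆ E`: all closed sets meeting `A`. -/
def hitting {E : Type*} [TopologicalSpace E] (A : Set E) : Set (Closeds E) :=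
  {F | ((F : Set E) ∩ A).Nonempty}

/-- The missing set `M(A)` of a subset `A ⊆ E`: all closed sets disjoint from `A`. -/
def missing {E : Type*} [TopologicalSpace E] (A : Set E) : Set (Closeds E) :=
  {F | (F : Set E) ∩ A = ∅}

/-- The upper Fell topology on the hyperspace of closed sets. -/
def upperFell (E : Type*) [TopologicalSpace E] : TopologicalSpace (Closeds E) :=
  generateFrom {U | ∃ K : Set E, IsCompact K ∧ U = missing K}

/-- The Fell topology on the hyperspace of closed sets. -/
def fell (E : Type*) [TopologicalSpace E] : TopologicalSpace (Closeds E) :=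
  generateFrom ({U | ∃ K : Set E, IsCompact K ∧ U = missing K} ∪
    {U | ∃ G : Set E, IsOpen G ∧ U = hitting G})

/-- The Borel σ-algebra of the Fell topology (it coincides with that of the
upper Fell topology). -/
def borelFell (E : Type*) [TopologicalSpace E] : MeasurableSpace (Closeds E) :=
  @borel (Closeds E) (fell E)

/-- Weak convergence of a net of (probability) measures with respect to a
topology `t` on the hyperspace: limsup over every `t`-closed set is dominated. -/
def WeakConvTo {E : Type*} [TopologicalSpace E] {ι : Type*} (l : Filter ι)
    (t : TopologicalSpace (Closeds E))
    (P : ι → @Measure (Closeds E) (borelFell E))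
    (Q : @Measure (Closeds E) (borelFell E)) : Prop :=
  ∀ C : Set (Closeds E), @IsClosed _ t C → l.limsup (fun i => P i C) ≤ Q C

/-!
The sets `M(K)`, `K` compact, are closed under finite intersections, so they form a base of
`τ_uF`. In a locally compact second-countable Hausdorff space a compact set `K` inside an open
set can be enlarged, inside that open set, to a member `D` of a fixed countable family of compact
sets (finite unions of compact closures of basic open sets). Hence the complement of a
`τ_uF`-closed set `C` is a countable union of sets `M(D)`, i.e. `C` is a countable intersection
of hitting sets `H(D)`. Continuity from above of the limit measure then reduces the limsup
inequality for `C` to finite intersections `H(D₁) ∩ ⋯ ∩ H(Dₘ)`; all `Dᵢ` are non-empty unless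
`C = ∅`.
-/

section Hyperspace

variable {E : Type*} [TopologicalSpace E]

lemma compl_missing (A : Set E) : (missing A)ᶜ = hitting A := by
  ext F
  simp [missing, hitting, nonempty_iff_ne_empty]

lemma missing_union (A B : Set E) : missing (A ∪ B) = missing A ∩ missing B := by
  ext F
  simp [missing, inter_union_distrib_left]

lemma missing_anti {A B : Set E} (h : A ⊆ B) : missing B ⊆ missing A := fun _ hF =>
  subset_empty_iff.mp <| (inter_subset_inter_right _ h).trans hF.subset

lemma mem_missing_iff_subset_compl {F : Closeds E} {A : Set E} :
    F ∈ missing A ↔ A ⊆ (F : Set E)ᶜ :=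
  (subset_compl_iff_disjoint_left.trans disjoint_iff_inter_eq_empty).symm

lemma hitting_empty : hitting (∅ : Set E) = ∅ := by
  simp [hitting]

lemma isTopologicalBasis_upperFell :
    @IsTopologicalBasis _ (upperFell E) {U | ∃ K : Set E, IsCompact K ∧ U = missing K} := by
  let := upperFell E
  refine ⟨?_, eq_univ_of_forall fun F => ⟨_, ⟨∅, isCompact_empty, rfl⟩, by simp [missing]⟩, rfl⟩
  rintro _ ⟨K₁, hK₁, rfl⟩ _ ⟨K₂, hK₂, rfl⟩ F hF
  exact ⟨_, ⟨K₁ ∪ K₂, hK₁.union hK₂, rfl⟩, (missing_union K₁ K₂).symm ▸ hF,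
    (missing_union K₁ K₂).subset⟩

lemma isClosed_upperFell_hitting {K : Set E} (hK : IsCompact K) :
    @IsClosed _ (upperFell E) (hitting K) := by
  let := upperFell E
  rw [← isOpen_compl_iff, ← compl_missing, compl_compl]
  exact isTopologicalBasis_upperFell.isOpen ⟨K, hK, rfl⟩

lemma measurableSet_hitting {K : Set E} (hK : IsCompact K) :
    MeasurableSet[borelFell E] (hitting K) := by
  rw [← compl_missing]
  exact (MeasurableSpace.measurableSet_generateFrom <|
    GenerateOpen.basic _ (Or.inl ⟨K, hK, rfl⟩)).compl

end Hyperspace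

lemma exists_countable_isCompact_between (E : Type*) [TopologicalSpace E]
    [LocallyCompactSpace E] [SecondCountableTopology E] [T2Space E] :
    ∃ 𝒟 : Set (Set E), 𝒟.Countable ∧ (∀ D ∈ 𝒟, IsCompact D) ∧
      ∀ K U : Set E, IsCompact K → IsOpen U → K ⊆ U → ∃ D ∈ 𝒟, K ⊆ D ∧ D ⊆ U := by
  have hb := isBasis_countableBasis E
  set 𝒮 : Set (Set E) := {V ∈ countableBasis E | IsCompact (closure V)}
  refine ⟨(fun t => ⋃ V ∈ t, closure V) '' {t | t.Finite ∧ t ⊆ 𝒮},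
    (countable_ofPred_finite_subset <|
      (countable_countableBasis E).mono (sep_subset _ _)).image _, ?_, ?_⟩
  · rintro _ ⟨t, ⟨ht, ht𝒮⟩, rfl⟩
    exact ht.isCompact_biUnion fun V hV => (ht𝒮 hV).2
  intro K U hK hU hKU
  set 𝒰 : Set (Set E) := {V ∈ 𝒮 | closure V ⊆ U}
  have h𝒰 : ∀ x ∈ K, ∃ V ∈ 𝒰, x ∈ V := by
    intro x hx
    obtain ⟨L, hL, hxL, hLU⟩ := exists_compact_subset hU (hKU hx)
    obtain ⟨V, hVb, hxV, hVL⟩ := hb.exists_subset_of_mem_open hxL isOpen_interior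
    have hVL' : closure V ⊆ L := closure_minimal (hVL.trans interior_subset) hL.isClosed
    exact ⟨V, ⟨⟨hVb, hL.of_isClosed_subset isClosed_closure hVL'⟩, hVL'.trans hLU⟩, hxV⟩
  obtain ⟨t, ht, htf, hKt⟩ := hK.elim_finite_subcover_image (fun V hV => hb.isOpen hV.1.1)
    fun x hx => let ⟨V, hV, hxV⟩ := h𝒰 x hx; mem_biUnion hV hxV
  exact ⟨_, ⟨t, ⟨htf, fun V hV => (ht hV).1⟩, rfl⟩,
    hKt.trans (iUnion₂_mono fun V _ => subset_closure), iUnion₂_subset fun V hV => (ht hV).2⟩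

lemma exists_countable_eq_biInter_hitting {E : Type*} [TopologicalSpace E]
    [LocallyCompactSpace E] [SecondCountableTopology E] [T2Space E] {C : Set (Closeds E)}
    (hC : @IsClosed _ (upperFell E) C) :
    ∃ S : Set (Set E), S.Countable ∧ (∀ K ∈ S, IsCompact K) ∧ C = ⋂ K ∈ S, hitting K := by
  let := upperFell E
  obtain ⟨𝒟, h𝒟, h𝒟K, h𝒟_between⟩ := exists_countable_isCompact_between E
  set S := {D ∈ 𝒟 | missing D ⊆ Cᶜ}
  refine ⟨S, h𝒟.mono (sep_subset _ _), fun D hD => h𝒟K D hD.1, ?_⟩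
  have hCc : Cᶜ = ⋃ D ∈ S, missing D := by
    refine (iUnion₂_subset fun D hD => hD.2).antisymm' fun F hF => ?_
    obtain ⟨_, ⟨K, hK, rfl⟩, hFK, hKC⟩ :=
      isTopologicalBasis_upperFell.exists_subset_of_mem_open hF hC.isOpen_compl
    obtain ⟨D, hD, hKD, hDF⟩ := h𝒟_between K _ hK F.isClosed.isOpen_compl
      (mem_missing_iff_subset_compl.mp hFK)
    exact mem_biUnion ⟨hD, (missing_anti hKD).trans hKC⟩ (mem_missing_iff_subset_compl.mpr hDF)
  simp_rw [← compl_missing, ← compl_iUnion₂, ← hCc, compl_compl]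

lemma limsup_measure_iInter_le_of_forall_fin {Ω ι : Type*} [MeasurableSpace Ω]
    {l : Filter ι} {P : ι → Measure Ω} {Q : Measure Ω} [IsFiniteMeasure Q] {s : ℕ → Set Ω}
    (hs : ∀ n, MeasurableSet (s n))
    (h : ∀ m, l.limsup (fun i => P i (⋂ j : Fin m, s j)) ≤ Q (⋂ j : Fin m, s j)) :
    l.limsup (fun i => P i (⋂ n, s n)) ≤ Q (⋂ n, s n) := by
  set t : ℕ → Set Ω := fun m => ⋂ j : Fin m, s j
  have ht_anti : Antitone t := fun a b hab =>
    subset_iInter fun j => iInter_subset (fun j : Fin b => s j) (Fin.castLE hab j)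
  have ht_iInter : ⋂ m, t m = ⋂ n, s n :=
    (subset_iInter fun n => (iInter_subset t (n + 1)).trans (iInter_subset _ (Fin.last n))).antisymm
      (subset_iInter fun m => subset_iInter fun j => iInter_subset s j)
  have ht : ∀ m, NullMeasurableSet (t m) Q := fun m =>
    (MeasurableSet.iInter fun j : Fin m => hs j).nullMeasurableSet
  have hQ : Tendsto (fun m => Q (t m)) atTop (nhds (Q (⋂ n, s n))) :=
    ht_iInter ▸ tendsto_measure_iInter_atTop ht ht_anti ⟨0, measure_ne_top Q _⟩
  refine ge_of_tendsto' hQ fun m => (limsup_le_limsup (.of_forall fun i => ?_)).trans (h m)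
  exact measure_mono (ht_iInter ▸ iInter_subset t m)

theorem stmt_3_general {E : Type*} [TopologicalSpace E] [LocallyCompactSpace E]
    [SecondCountableTopology E] [T2Space E] {ι : Type*} (l : Filter ι)
    (P : ι → @Measure (Closeds E) (borelFell E)) (Q : @Measure (Closeds E) (borelFell E))
    (hQ : IsProbabilityMeasure Q) :
    WeakConvTo l (upperFell E) P Q ↔
      ∀ (m : ℕ) (K : Fin m → Set E), (∀ i, IsCompact (K i)) → (∀ i, (K i).Nonempty) →
        l.limsup (fun i => P i (⋂ j, hitting (K j))) ≤ Q (⋂ j, hitting (K j)) := by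
  let := borelFell E
  refine ⟨fun h m K hK _ => h _ ?_, fun h C hC => ?_⟩
  · let := upperFell E
    exact isClosed_iInter fun j => isClosed_upperFell_hitting (hK j)
  obtain ⟨S, hS, hSK, rfl⟩ := exists_countable_eq_biInter_hitting hC
  by_cases hS_empty : ∅ ∈ S
  · rw [subset_empty_iff.mp ((biInter_subset_of_mem hS_empty).trans hitting_empty.subset)]
    simpa using limsup_const_bot (f := l) (α := ℝ≥0∞)
  rcases S.eq_empty_or_nonempty with rfl | hS_ne
  · simpa using h 0 (fun j => j.elim0) (fun j => j.elim0) (fun j => j.elim0)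
  obtain ⟨f, rfl⟩ := hS.exists_eq_range hS_ne
  have hfK (n : ℕ) : IsCompact (f n) := hSK _ ⟨n, rfl⟩
  have hf_ne (n : ℕ) : (f n).Nonempty :=
    nonempty_iff_ne_empty.mpr fun hn => hS_empty ⟨n, hn⟩
  rw [biInter_range]
  exact limsup_measure_iInter_le_of_forall_fin (fun n => measurableSet_hitting (hfK n))
    fun m => h m (fun j => f j) (fun j => hfK j) (fun j => hf_ne j)

/-- weak convergence on `(F, τ_uF)` is equivalent to the limsup
inequality over all finite intersections of hitting sets of non-empty compact
sets. -/
theorem stmt_3 {E : Type*} [TopologicalSpace E] [LocallyCompactSpace E]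
    [SecondCountableTopology E] [T2Space E] {ι : Type*} (l : Filter ι) [l.NeBot]
    (P : ι → @Measure (Closeds E) (borelFell E)) (Q : @Measure (Closeds E) (borelFell E))
    (hP : ∀ i, IsProbabilityMeasure (P i)) (hQ : IsProbabilityMeasure Q) :
    WeakConvTo l (upperFell E) P Q ↔
      ∀ (m : ℕ) (K : Fin m → Set E), (∀ i, IsCompact (K i)) → (∀ i, (K i).Nonempty) →
        l.limsup (fun i => P i (⋂ j, hitting (K j))) ≤ Q (⋂ j, hitting (K j)) :=
  stmt_3_general l P Q hQ
end

section
/- Let (P_α) be a net of probability measures on F such that: (i) P_α →_w P on (F, τ_uF); (ii) for each ε > 0 there is a compact K with liminf_α P_α({F ∈ F : ∅ ≠ F ⊆ K}) ≥ 1 − ε; and (iii) P(F_{0,1}) = 1, where F_{0,1} = {∅} ∪ {{x} : x ∈ E}. Then P_α →_w P on (F, τ_F). -/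
open TopologicalSpace MeasureTheory Filter Set
open scoped ENNReal

/-! Fix a Fell-closed `C`, `ε > 0`, the compact `K` given by (ii), and let `D` be the
upper Fell closure of `C ∩ {F | ∅ ≠ F ⊆ K}`. Since `C ⊆ D ∪ {F | ∅ ≠ F ⊆ K}ᶜ`, (i) and (ii) give
`limsup P_α C ≤ P D + ε`. Every `F ∈ D` with at most one point lies in `C`: at `∅` the Fell and
upper Fell neighbourhoods agree, while a Fell neighbourhood of `{x}` contains every nonempty `F ⊆ G`
for some open `G ∋ x`, and inside `K` these sets are caught by the upper Fell neighbourhood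
`M(K \ int L)` of `{x}`, `L` being a compact neighbourhood of `x` in `G`. By (iii), `P D ≤ P C`. -/

open scoped Topology

theorem ENNReal.limsup_add_le_add_limsup {ι : Type*} (l : Filter ι) (u v : ι → ℝ≥0∞) :
    l.limsup (u + v) ≤ l.limsup u + l.limsup v := by
  refine ENNReal.le_of_forall_pos_le_add fun ε hε hfin => ?_
  obtain ⟨hu, hv⟩ := ENNReal.add_lt_top.1 hfin
  have hε₂ : (ε / 2 : ℝ≥0∞) ≠ 0 := by simpa using hε.ne'
  calc l.limsup (u + v) ≤ (l.limsup u + ε / 2) + (l.limsup v + ε / 2) := by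
        refine limsup_le_of_le (by isBoundedDefault) ?_
        filter_upwards [eventually_lt_of_limsup_lt (ENNReal.lt_add_right hu.ne hε₂),
          eventually_lt_of_limsup_lt (ENNReal.lt_add_right hv.ne hε₂)] with i hui hvi
        exact add_le_add hui.le hvi.le
    _ = l.limsup u + l.limsup v + ε := by rw [add_add_add_comm, ENNReal.add_halves]

lemma limsup_measure_compl_le {α ι : Type*} [MeasurableSpace α] {l : Filter ι}
    {μ : ι → Measure α} [∀ i, IsProbabilityMeasure (μ i)] {s : Set α} (hs : MeasurableSet s)
    {ε : ℝ≥0∞} (h : 1 - ε ≤ l.liminf fun i => μ i s) :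
    l.limsup (fun i => μ i sᶜ) ≤ ε := by
  simp_rw [prob_compl_eq_one_sub hs]
  rw [ENNReal.limsup_const_sub l _ ENNReal.one_ne_top]
  exact tsub_le_iff_tsub_le.1 h

section Hyperspace

variable {E : Type*} [TopologicalSpace E]

lemma isOpen_missing_upperFell {K : Set E} (hK : IsCompact K) :
    IsOpen[upperFell E] (missing K) :=
  .basic _ ⟨K, hK, rfl⟩

lemma isOpen_hitting_fell {G : Set E} (hG : IsOpen G) : IsOpen[fell E] (hitting G) :=
  .basic _ (Or.inr ⟨G, hG, rfl⟩)

lemma measurableSet_of_isOpen_fell {U : Set (Closeds E)} (hU : IsOpen[fell E] U) :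
    MeasurableSet[borelFell E] U :=
  MeasurableSpace.measurableSet_generateFrom hU

-- No hitting set contains `∅`.
lemma exists_isOpen_upperFell_of_bot_mem {U : Set (Closeds E)} (hU : IsOpen[fell E] U)
    (hbot : ⊥ ∈ U) : ∃ V, IsOpen[upperFell E] V ∧ ⊥ ∈ V ∧ V ⊆ U := by
  induction hU with
  | basic U hU =>
    rcases hU with ⟨K, hK, rfl⟩ | ⟨G, -, rfl⟩
    · exact ⟨_, isOpen_missing_upperFell hK, hbot, subset_rfl⟩
    · simp [hitting] at hbot
  | univ => exact ⟨univ, @isOpen_univ _ (upperFell E), trivial, subset_rfl⟩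
  | inter U₁ U₂ _ _ ih₁ ih₂ =>
    obtain ⟨V₁, hV₁, hbot₁, hVU₁⟩ := ih₁ hbot.1
    obtain ⟨V₂, hV₂, hbot₂, hVU₂⟩ := ih₂ hbot.2
    exact ⟨V₁ ∩ V₂, @IsOpen.inter _ (upperFell E) _ _ hV₁ hV₂, ⟨hbot₁, hbot₂⟩,
      inter_subset_inter hVU₁ hVU₂⟩
  | sUnion S _ ih =>
    obtain ⟨U, hUS, hbotU⟩ := hbot
    obtain ⟨V, hV, hbotV, hVU⟩ := ih U hUS hbotU
    exact ⟨V, hV, hbotV, hVU.trans (subset_sUnion_of_mem hUS)⟩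

lemma exists_isOpen_forall_mem_of_singleton_mem [T2Space E] {U : Set (Closeds E)}
    (hU : IsOpen[fell E] U) {x : E} (hx : {x} ∈ U) :
    ∃ G : Set E, IsOpen G ∧ x ∈ G ∧
      ∀ F : Closeds E, (F : Set E).Nonempty → (F : Set E) ⊆ G → F ∈ U := by
  induction hU with
  | basic U hU =>
    rcases hU with ⟨K, hK, rfl⟩ | ⟨G, hG, rfl⟩
    · refine ⟨Kᶜ, hK.isClosed.isOpen_compl, ?_, fun F _ hFK => ?_⟩
      · simpa [missing] using hx
      · exact (subset_compl_iff_disjoint_right.1 hFK).inter_eq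
    · refine ⟨G, hG, by simpa [hitting] using hx, fun F ⟨y, hy⟩ hFG => ⟨y, hy, hFG hy⟩⟩
  | univ => exact ⟨univ, isOpen_univ, trivial, fun _ _ _ => trivial⟩
  | inter U₁ U₂ _ _ ih₁ ih₂ =>
    obtain ⟨G₁, hG₁, hxG₁, hGU₁⟩ := ih₁ hx.1
    obtain ⟨G₂, hG₂, hxG₂, hGU₂⟩ := ih₂ hx.2
    exact ⟨G₁ ∩ G₂, hG₁.inter hG₂, ⟨hxG₁, hxG₂⟩, fun F hF hFG =>
      ⟨hGU₁ F hF (hFG.trans inter_subset_left), hGU₂ F hF (hFG.trans inter_subset_right)⟩⟩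
  | sUnion S _ ih =>
    obtain ⟨U, hUS, hxU⟩ := hx
    obtain ⟨G, hG, hxG, hGU⟩ := ih U hUS hxU
    exact ⟨G, hG, hxG, fun F hF hFG => ⟨U, hUS, hGU F hF hFG⟩⟩

lemma isClosed_fell_setOf_subsingleton [T2Space E] :
    IsClosed[fell E] {F : Closeds E | (F : Set E).Subsingleton} := by
  rw [← @isOpen_compl_iff _ _ (fell E), @isOpen_iff_forall_mem_open _ (fell E)]
  intro F hF
  obtain ⟨x, hx, y, hy, hxy⟩ : ∃ x ∈ (F : Set E), ∃ y ∈ (F : Set E), x ≠ y := by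
    simpa [Set.Subsingleton] using hF
  obtain ⟨G₁, G₂, hG₁, hG₂, hxG₁, hyG₂, hG⟩ := t2_separation hxy
  refine ⟨hitting G₁ ∩ hitting G₂, ?_,
    @IsOpen.inter _ (fell E) _ _ (isOpen_hitting_fell hG₁) (isOpen_hitting_fell hG₂),
    ⟨x, hx, hxG₁⟩, ⟨y, hy, hyG₂⟩⟩
  rintro F' ⟨⟨a, ha, haG₁⟩, ⟨b, hb, hbG₂⟩⟩ hF'
  exact hG.ne_of_mem haG₁ hbG₂ (hF' ha hb)

lemma measurableSet_setOf_subsingleton [T2Space E] :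
    MeasurableSet[borelFell E] {F : Closeds E | (F : Set E).Subsingleton} :=
  .of_compl (measurableSet_of_isOpen_fell isClosed_fell_setOf_subsingleton.isOpen_compl)

lemma measurableSet_setOf_nonempty_subset [T2Space E] {K : Set E} (hK : IsCompact K) :
    MeasurableSet[borelFell E] {F : Closeds E | (F : Set E).Nonempty ∧ (F : Set E) ⊆ K} := by
  have hT : {F : Closeds E | (F : Set E).Nonempty ∧ (F : Set E) ⊆ K} =
      hitting univ \ hitting Kᶜ := by
    ext F
    simp [hitting, Set.inter_compl_nonempty_iff]
  rw [hT]
  exact (measurableSet_of_isOpen_fell (isOpen_hitting_fell isOpen_univ)).diff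
    (measurableSet_of_isOpen_fell (isOpen_hitting_fell hK.isClosed.isOpen_compl))

lemma mem_of_subsingleton_of_mem_closure_upperFell [LocallyCompactSpace E] [T2Space E]
    {C : Set (Closeds E)} (hC : IsClosed[fell E] C) {K : Set E} (hK : IsCompact K)
    {F₀ : Closeds E} (hF₀ : (F₀ : Set E).Subsingleton)
    (hmem : F₀ ∈ closure[upperFell E] (C ∩ {F | (F : Set E).Nonempty ∧ (F : Set E) ⊆ K})) :
    F₀ ∈ C := by
  by_contra hF₀C
  have hCc : IsOpen[fell E] Cᶜ := @IsClosed.isOpen_compl _ (fell E) _ hC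
  rw [@mem_closure_iff _ (upperFell E)] at hmem
  rcases hF₀.eq_empty_or_singleton with hempty | ⟨x, hx⟩
  · obtain rfl : F₀ = ⊥ := SetLike.coe_injective hempty
    obtain ⟨V, hV, hbotV, hVC⟩ := exists_isOpen_upperFell_of_bot_mem hCc hF₀C
    obtain ⟨F, hFV, hFC, -⟩ := hmem V hV hbotV
    exact hVC hFV hFC
  · obtain rfl : F₀ = {x} := SetLike.coe_injective hx
    obtain ⟨G, hG, hxG, hGC⟩ := exists_isOpen_forall_mem_of_singleton_mem hCc hF₀C
    obtain ⟨L, -, hxL, hLG⟩ := exists_compact_subset hG hxG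
    -- A set inside `K` that misses `K \ interior L` lies in `interior L ⊆ G`.
    have hx_missing : {x} ∈ missing (K \ interior L) := by simp [missing, hxL]
    obtain ⟨F, hFV, hFC, hFne, hFK⟩ :=
      hmem _ (isOpen_missing_upperFell (hK.diff isOpen_interior)) hx_missing
    refine hGC F hFne (fun y hy => hLG (interior_subset ?_)) hFC
    by_contra hyL
    exact (hFV.subset ⟨hy, hFK hy, hyL⟩ : y ∈ (∅ : Set E))

end Hyperspace

theorem stmt_7_general {E : Type*} [TopologicalSpace E] [LocallyCompactSpace E]
    [T2Space E] {ι : Type*} (l : Filter ι)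
    (P : ι → @Measure (Closeds E) (borelFell E)) (Q : @Measure (Closeds E) (borelFell E))
    (hP : ∀ i, IsProbabilityMeasure (P i)) (hQ : IsProbabilityMeasure Q)
    (h1 : WeakConvTo l (upperFell E) P Q)
    (h2 : ∀ ε : ℝ≥0∞, 0 < ε → ∃ K : Set E, IsCompact K ∧
      1 - ε ≤ l.liminf (fun i =>
        P i {F : Closeds E | (F : Set E).Nonempty ∧ (F : Set E) ⊆ K}))
    (h3 : Q {F : Closeds E | (F : Set E).Subsingleton} = 1) :
    WeakConvTo l (fell E) P Q := by
  let _ : MeasurableSpace (Closeds E) := borelFell E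
  intro C hC
  refine ENNReal.le_of_forall_pos_le_add fun ε hε _ => ?_
  obtain ⟨K, hK, hKP⟩ := h2 ε (by exact_mod_cast hε)
  set T := {F : Closeds E | (F : Set E).Nonempty ∧ (F : Set E) ⊆ K}
  set D := closure[upperFell E] (C ∩ T)
  have hCD : ∀ i, P i C ≤ P i D + P i Tᶜ := fun i => by
    refine (measure_mono fun F hF => ?_).trans (measure_union_le D Tᶜ)
    by_cases hFT : F ∈ T
    exacts [Or.inl (@subset_closure _ (upperFell E) _ _ ⟨hF, hFT⟩), Or.inr hFT]
  have hDC : D ≤ᵐ[Q] C := by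
    filter_upwards [mem_ae_iff.2 ((prob_compl_eq_zero_iff measurableSet_setOf_subsingleton).2 h3)]
      with F hFS hFD
    exact mem_of_subsingleton_of_mem_closure_upperFell hC hK hFS hFD
  calc l.limsup (fun i => P i C)
      ≤ l.limsup ((fun i => P i D) + fun i => P i Tᶜ) := limsup_le_limsup (.of_forall hCD)
    _ ≤ l.limsup (fun i => P i D) + l.limsup (fun i => P i Tᶜ) :=
      ENNReal.limsup_add_le_add_limsup _ _ _
    _ ≤ Q C + ε := add_le_add ((h1 D (@isClosed_closure _ (upperFell E) _)).trans
      (measure_mono_ae hDC)) (limsup_measure_compl_le (measurableSet_setOf_nonempty_subset hK) hKP)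

/-- weak convergence on `(F, τ_uF)` together with the strengthened
asymptotic compact-boundedness and `Q`-a.s. at-most-one-point limits implies
weak convergence on `(F, τ_F)`. -/
theorem stmt_7 {E : Type*} [TopologicalSpace E] [LocallyCompactSpace E]
    [SecondCountableTopology E] [T2Space E] {ι : Type*} (l : Filter ι) [l.NeBot]
    (P : ι → @Measure (Closeds E) (borelFell E)) (Q : @Measure (Closeds E) (borelFell E))
    (hP : ∀ i, IsProbabilityMeasure (P i)) (hQ : IsProbabilityMeasure Q)
    (h1 : WeakConvTo l (upperFell E) P Q)
    (h2 : ∀ ε : ℝ≥0∞, 0 < ε → ∃ K : Set E, IsCompact K ∧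
      1 - ε ≤ l.liminf (fun i =>
        P i {F : Closeds E | (F : Set E).Nonempty ∧ (F : Set E) ⊆ K}))
    (h3 : Q {F : Closeds E | (F : Set E).Subsingleton} = 1) :
    WeakConvTo l (fell E) P Q :=
  stmt_7_general l P Q hP hQ h1 h2 h3
end

section
/- Let (F_α) be a net of closed subsets of E. (a) If F_α → {x} in the upper Fell topology and there are a compact K and an index α₀ with ∅ ≠ F_α ⊆ K for all α ≥ α₀, then F_α → {x} in the Fell topology. (b) F_α → ∅ in the upper Fell topology if and only if F_α → ∅ in the Fell topology. -/
open TopologicalSpace MeasureTheory Filter Set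
open scoped ENNReal

/- The Fell topology is the upper Fell topology plus the hitting sets, so Fell convergence is
upper Fell convergence together with eventual hitting of every open set met by the limit.
For `A = ∅` no open set is hit; for `A = {x}` the sets eventually lie in a compact `K` and miss
the compact `K \ G`, so they meet `G` as soon as they are non-empty. -/

section Hyperspace

variable {E : Type*} [TopologicalSpace E] {ι : Type*} {l : Filter ι} {Fn : ι → Closeds E}
  {A : Closeds E}

theorem fell_le_upperFell : fell E ≤ upperFell E :=
  generateFrom_anti subset_union_left

theorem Filter.Tendsto.eventually_mem_missing
    (h : Tendsto Fn l (@nhds (Closeds E) (upperFell E) A)) {K : Set E} (hK : IsCompact K)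
    (hA : A ∈ missing K) : ∀ᶠ i in l, Fn i ∈ missing K :=
  h (@IsOpen.mem_nhds _ (upperFell E) _ _ (isOpen_generateFrom_of_mem ⟨K, hK, rfl⟩) hA)

theorem tendsto_fell_iff :
    Tendsto Fn l (@nhds (Closeds E) (fell E) A) ↔
      Tendsto Fn l (@nhds (Closeds E) (upperFell E) A) ∧
        ∀ G : Set E, IsOpen G → A ∈ hitting G → ∀ᶠ i in l, Fn i ∈ hitting G := by
  constructor
  · intro h
    refine ⟨h.mono_right (nhds_mono fell_le_upperFell), fun G hG hA => h ?_⟩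
    exact @IsOpen.mem_nhds _ (fell E) _ _
      (isOpen_generateFrom_of_mem (Or.inr ⟨G, hG, rfl⟩)) hA
  · rintro ⟨hup, hhit⟩
    rw [fell, tendsto_nhds_generateFrom_iff]
    rintro s (⟨K, hK, rfl⟩ | ⟨G, hG, rfl⟩) hA
    · exact hup.eventually_mem_missing hK hA
    · exact hhit G hG hA

theorem Filter.Tendsto.eventually_mem_hitting_of_subset_compact [T1Space E] {x : E}
    (h : Tendsto Fn l (@nhds (Closeds E) (upperFell E) ⟨{x}, isClosed_singleton⟩))
    {K : Set E} (hK : IsCompact K)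
    (hsub : ∀ᶠ i in l, (Fn i : Set E).Nonempty ∧ (Fn i : Set E) ⊆ K)
    {G : Set E} (hG : IsOpen G) (hx : x ∈ G) : ∀ᶠ i in l, Fn i ∈ hitting G := by
  have hmiss : ∀ᶠ i in l, Fn i ∈ missing (K \ G) :=
    h.eventually_mem_missing (hK.diff hG) (by simp [missing, hx])
  filter_upwards [hsub, hmiss] with i ⟨⟨y, hy⟩, hFK⟩ hFi
  refine ⟨y, hy, of_not_not fun hyG => ?_⟩
  exact (eq_empty_iff_forall_notMem.mp hFi) y ⟨hy, hFK hy, hyG⟩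

theorem tendsto_fell_bot_iff :
    Tendsto Fn l (@nhds (Closeds E) (fell E) ⊥) ↔
      Tendsto Fn l (@nhds (Closeds E) (upperFell E) ⊥) := by
  rw [tendsto_fell_iff]
  exact and_iff_left fun G _ hbot => absurd hbot (by simp [hitting])

end Hyperspace

theorem stmt_17_general {E : Type*} [TopologicalSpace E] [T2Space E] {ι : Type*} (l : Filter ι)
    (Fn : ι → Closeds E) :
    (∀ x : E,
      Tendsto Fn l (@nhds (Closeds E) (upperFell E) ⟨{x}, isClosed_singleton⟩) →
      (∃ K : Set E, IsCompact K ∧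
        ∀ᶠ i in l, (Fn i : Set E).Nonempty ∧ (Fn i : Set E) ⊆ K) →
      Tendsto Fn l (@nhds (Closeds E) (fell E) ⟨{x}, isClosed_singleton⟩)) ∧
    (Tendsto Fn l (@nhds (Closeds E) (upperFell E) ⊥) ↔
      Tendsto Fn l (@nhds (Closeds E) (fell E) ⊥)) := by
  refine ⟨fun x hup ⟨K, hK, hsub⟩ => ?_, tendsto_fell_bot_iff.symm⟩
  exact tendsto_fell_iff.mpr ⟨hup, fun G hG hx =>
    hup.eventually_mem_hitting_of_subset_compact hK hsub hG (by simpa [hitting] using hx)⟩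

/-- (a) a net of closed sets converging to a singleton in the
upper Fell topology and eventually non-empty and contained in a fixed compact
set converges in the Fell topology; (b) convergence to `∅` in the upper Fell
topology is equivalent to convergence to `∅` in the Fell topology. -/
theorem stmt_17 {E : Type*} [TopologicalSpace E] [LocallyCompactSpace E]
    [SecondCountableTopology E] [T2Space E] {ι : Type*} (l : Filter ι) [l.NeBot]
    (Fn : ι → Closeds E) :
    (∀ x : E,
      Tendsto Fn l (@nhds (Closeds E) (upperFell E) ⟨{x}, isClosed_singleton⟩) →
      (∃ K : Set E, IsCompact K ∧
        ∀ᶠ i in l, (Fn i : Set E).Nonempty ∧ (Fn i : Set E) ⊆ K) →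
      Tendsto Fn l (@nhds (Closeds E) (fell E) ⟨{x}, isClosed_singleton⟩)) ∧
    (Tendsto Fn l (@nhds (Closeds E) (upperFell E) ⊥) ↔
      Tendsto Fn l (@nhds (Closeds E) (fell E) ⊥)) :=
  stmt_17_general l Fn
end
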